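/- Let m ≥ n ≥ 2 be integers, let ρ ≥ 1 be a real number, let r be a real number with 0 ≤ r ≤ n, and let l be a real number with 0 < l ≤ m−n+1. Then the infimum over the no-outage set T(n,r) of G_GG(a) = Σ_{i=1}^n w_i·a_i + (n·m·(ρ−1)/2)·a_n + (l/2)·(Σ_{i=1}^n max(2−a_i, 0) − 2r) equals l·(n−r), and it is attained at the point a = (0, …, 0). -/
import Mathlib


/-- For integers `m ≥ n ≥ 2`, real `ρ ≥ 1`, real `0 ≤ r ≤ n`, and real block length
`0 < l ≤ m−n+1`, the infimum over the no-outage set `T(n,r)` of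
`G_GG(a) = Σ w_i·a_i + (n·m·(ρ−1)/2)·a_n + (l/2)·(Σ max(2−a_i,0) − 2r)` equals
`l·(n−r)`, attained at `a = (0, …, 0)`. -/
theorem random_coding_exponent_gamma_gamma_short_block
    (m n : ℕ) (hn : 2 ≤ n) (hnm : n ≤ m) (ρ : ℝ) (hρ : 1 ≤ ρ)
    (r l : ℝ) (hr0 : 0 ≤ r) (hrn : r ≤ n) (hl0 : 0 < l) (hl : l ≤ (m : ℝ) - n + 1) :
    let w : Fin n → ℝ := fun i => ((m : ℝ) - n + 2 * ((i : ℕ) + 1) - 1) / 2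
    let T : Set (Fin n → ℝ) :=
      {a | Antitone a ∧ (∀ i, 0 ≤ a i) ∧ ∑ i, a i ≤ 2 * ((n : ℝ) - r)}
    let G : (Fin n → ℝ) → ℝ :=
      fun a => ∑ i, w i * a i + ((n : ℝ) * m * (ρ - 1) / 2) * a ⟨n - 1, by omega⟩
        + (l / 2) * ((∑ i, max (2 - a i) 0) - 2 * r)
    (fun _ : Fin n => (0 : ℝ)) ∈ T ∧
      G (fun _ => 0) = l * ((n : ℝ) - r) ∧
      ∀ a ∈ T, l * ((n : ℝ) - r) ≤ G a := by
  intro w T G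
  have hmn : (n : ℝ) ≤ (m : ℝ) := by exact_mod_cast hnm
  refine ⟨⟨antitone_const, fun i => le_refl 0, by simp; linarith⟩, ?_, ?_⟩
  · simp only [G, w, mul_zero, sub_zero, Finset.sum_const_zero, zero_add]
    have h2 : (max (2 : ℝ) 0) = 2 := max_eq_left (by norm_num)
    rw [h2]
    simp [Finset.sum_const, Finset.card_univ]
    ring
  · rintro a ⟨ha_anti, ha_pos, ha_sum⟩
    have hw : ∀ i, l / 2 * a i ≤ w i * a i := by
      intro i
      apply mul_le_mul_of_nonneg_right _ (ha_pos i)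
      have h1 : (1 : ℝ) ≤ ((i : ℕ) : ℝ) + 1 := by linarith [Nat.cast_nonneg (α := ℝ) (i : ℕ)]
      simp only [w]
      linarith
    have hS : ∑ i, (l / 2) * a i ≤ ∑ i, w i * a i := Finset.sum_le_sum fun i _ => hw i
    have hM : ∑ i, (2 - a i) ≤ ∑ i, max (2 - a i) 0 :=
      Finset.sum_le_sum fun i _ => le_max_left _ _
    have hsum2 : ∑ i : Fin n, (2 - a i) = 2 * n - ∑ i, a i := by
      rw [Finset.sum_sub_distrib]
      simp [Finset.sum_const, Finset.card_univ]
      ring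
    have hc : 0 ≤ ((n : ℝ) * m * (ρ - 1) / 2) * a ⟨n - 1, by omega⟩ := by
      apply mul_nonneg _ (ha_pos _)
      have h2 : (0:ℝ) ≤ ρ - 1 := by linarith
      positivity
    have hlS : ∑ i, (l / 2) * a i = (l / 2) * ∑ i, a i := by
      rw [Finset.mul_sum]
    simp only [G]
    rw [hsum2] at hM
    have := mul_le_mul_of_nonneg_left hM (by linarith : (0:ℝ) ≤ l / 2)
    nlinarith [hS, hc, this]
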